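/- arXiv:1610.08244 — 4 statements merged into one kernel-verified Lean document; each statement's English description precedes it below -/
import Mathlib

section
/- Fix λ > 0 and for ν > 0 let p_ν denote the CMP probability mass function with parameters (λ, ν). As ν → ∞, the CMP distribution converges to the Bernoulli distribution with success probability λ/(1 + λ): p_ν(0) → 1/(1 + λ), p_ν(1) → λ/(1 + λ), and p_ν(y) → 0 for every y ≥ 2. -/
/-! As `ν → ∞`, `(s!)^ν` stays `1` for `s ≤ 1` and blows up for `s ≥ 2`, so each term of
`ζ(λ, ν)` converges to that of `1 + λ`; for `ν ≥ 1` all terms are dominated by `|λ|^s / s!`,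
so by dominated convergence `ζ(λ, ν) → 1 + λ`, and the limits of `p_ν(y)` follow. -/

open Filter Topology

/-- The Conway–Maxwell Poisson normalizing constant
`ζ(λ, ν) = ∑_{s=0}^∞ λ^s / (s!)^ν`. -/
noncomputable def cmpZeta (lam nu : ℝ) : ℝ :=
  ∑' s : ℕ, lam ^ s / (s.factorial : ℝ) ^ nu

/-- The CMP probability mass function `p_ν(y) = λ^y / ((y!)^ν ζ(λ, ν))`. -/
noncomputable def cmpPmf (lam nu : ℝ) (y : ℕ) : ℝ :=
  lam ^ y / ((y.factorial : ℝ) ^ nu * cmpZeta lam nu)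

lemma tendsto_div_factorial_rpow_atTop (c : ℝ) {s : ℕ} (hs : 2 ≤ s) :
    Tendsto (fun nu : ℝ => c / (s.factorial : ℝ) ^ nu) atTop (𝓝 0) := by
  have hfact : (1 : ℝ) < s.factorial := by
    exact_mod_cast one_lt_two.trans_le (hs.trans s.self_le_factorial)
  exact tendsto_const_nhds.div_atTop (tendsto_rpow_atTop_of_base_gt_one _ hfact)

lemma norm_pow_div_factorial_rpow_le (lam : ℝ) {nu : ℝ} (hnu : 1 ≤ nu) (s : ℕ) :
    ‖lam ^ s / (s.factorial : ℝ) ^ nu‖ ≤ |lam| ^ s / s.factorial := by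
  have hfact : (1 : ℝ) ≤ s.factorial := by exact_mod_cast s.factorial_pos
  rw [norm_div, norm_pow, Real.norm_eq_abs,
    Real.norm_of_nonneg (Real.rpow_nonneg (by positivity) _)]
  gcongr
  simpa using Real.rpow_le_rpow_of_exponent_le hfact hnu

lemma tendsto_pow_div_factorial_rpow (lam : ℝ) (s : ℕ) :
    Tendsto (fun nu : ℝ => lam ^ s / (s.factorial : ℝ) ^ nu) atTop
      (𝓝 (if s ≤ 1 then lam ^ s else 0)) := by
  rcases le_or_gt s 1 with hs | hs
  · have hfact : (s.factorial : ℝ) = 1 := by interval_cases s <;> simp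
    simp [hs, hfact]
  · simpa [hs.not_ge] using tendsto_div_factorial_rpow_atTop (lam ^ s) hs

lemma tendsto_cmpZeta (lam : ℝ) : Tendsto (cmpZeta lam) atTop (𝓝 (1 + lam)) := by
  have hlimit : ∑' s : ℕ, (if s ≤ 1 then lam ^ s else 0) = 1 + lam := by
    rw [tsum_eq_sum (s := Finset.range 2) fun s hs => if_neg (by simpa using hs)]
    simp [Finset.sum_range_succ]
  rw [← hlimit]
  exact tendsto_tsum_of_dominated_convergence (Real.summable_pow_div_factorial |lam|)
    (tendsto_pow_div_factorial_rpow lam)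
    ((eventually_ge_atTop 1).mono fun _ hnu => norm_pow_div_factorial_rpow_le lam hnu)

/-- Fix `λ > 0`. As `ν → ∞`, the CMP distribution converges to the Bernoulli distribution
with success probability `λ/(1 + λ)`: `p_ν(0) → 1/(1 + λ)`, `p_ν(1) → λ/(1 + λ)`,
and `p_ν(y) → 0` for every `y ≥ 2`. -/
theorem cmp_tendsto_bernoulli (lam : ℝ) (hlam : 0 < lam) :
    Filter.Tendsto (fun nu : ℝ => cmpPmf lam nu 0) Filter.atTop (nhds (1 / (1 + lam))) ∧
    Filter.Tendsto (fun nu : ℝ => cmpPmf lam nu 1) Filter.atTop (nhds (lam / (1 + lam))) ∧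
    ∀ y : ℕ, 2 ≤ y →
      Filter.Tendsto (fun nu : ℝ => cmpPmf lam nu y) Filter.atTop (nhds 0) := by
  have hzeta := tendsto_cmpZeta lam
  have hne : 1 + lam ≠ 0 := by positivity
  refine ⟨?_, ?_, fun y hy => ?_⟩
  · simpa [cmpPmf] using hzeta.inv₀ hne
  · simpa [cmpPmf, Pi.div_def] using (tendsto_const_nhds (x := lam)).div hzeta hne
  · simp_rw [cmpPmf, ← div_div]
    simpa [Pi.div_def] using (tendsto_div_factorial_rpow_atTop (lam ^ y) hy).div hzeta hne
end

section
/- Fix λ > 0. The function ν ↦ ζ(λ, ν) is differentiable on (0, ∞) with derivative ∂ζ/∂ν = −∑_{s=0}^∞ ln(s!) λ^s / (s!)^ν, and the cumulant identity E[ln(Y!)] = −∂ ln ζ(λ, ν)/∂ν holds: ∑_{y=0}^∞ ln(y!) · λ^y / ((y!)^ν ζ(λ, ν)) = −(∂ζ/∂ν)(λ, ν) / ζ(λ, ν). -/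
/-!
The series for `ζ(λ, ·)` converges by the ratio test: the ratio of consecutive terms is
`|λ| / (n + 1)^ν → 0`. Termwise differentiation in `ν` is justified on `(ν/2, ∞)` because
`ln (n!) ≤ (n!)^(ν/4) / (ν/4)`, so the differentiated terms are dominated by the summable terms
of the series at exponent `ν/4`. The cumulant identity then only pulls the constant `ζ(λ, ν)`
out of the sum.
-/

open Filter Real

lemma norm_pow_div_factorial_rpow_succ (x d : ℝ) (n : ℕ) :
    ‖x ^ (n + 1) / ((n + 1).factorial : ℝ) ^ d‖
      = |x| / ((n : ℝ) + 1) ^ d * ‖x ^ n / (n.factorial : ℝ) ^ d‖ := by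
  have hfac : ((n + 1).factorial : ℝ) = ((n : ℝ) + 1) * n.factorial := by
    push_cast [Nat.factorial_succ]; ring
  rw [hfac, mul_rpow (by positivity) (by positivity)]
  have hn₀ : (0 : ℝ) < n.factorial := by positivity
  simp only [norm_div, norm_pow, norm_eq_abs, abs_of_pos (rpow_pos_of_pos hn₀ d),
    abs_mul, abs_of_pos (rpow_pos_of_pos (by positivity : (0 : ℝ) < n + 1) d)]
  field_simp
  ring

lemma summable_pow_div_factorial_rpow (x : ℝ) {d : ℝ} (hd : 0 < d) :
    Summable fun n : ℕ => x ^ n / (n.factorial : ℝ) ^ d := by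
  refine summable_of_ratio_norm_eventually_le (r := 1 / 2) (by norm_num) ?_
  have hgrowth : Tendsto (fun n : ℕ => ((n : ℝ) + 1) ^ d) atTop atTop :=
    (tendsto_rpow_atTop hd).comp (tendsto_atTop_add_const_right _ 1 tendsto_natCast_atTop_atTop)
  filter_upwards [hgrowth.eventually_ge_atTop (2 * |x|)] with n hn
  have hratio : |x| / ((n : ℝ) + 1) ^ d ≤ 1 / 2 := by
    rw [div_le_iff₀ (by positivity)]
    linarith
  rw [norm_pow_div_factorial_rpow_succ]
  exact mul_le_mul_of_nonneg_right hratio (norm_nonneg _)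

lemma log_div_rpow_le {y ε c v : ℝ} (hy : 1 ≤ y) (hε : 0 < ε) (hcv : c ≤ v) :
    log y / y ^ v ≤ ε⁻¹ / y ^ (c - ε) := by
  have hy₀ : 0 < y := by linarith
  calc log y / y ^ v ≤ y ^ ε / ε / y ^ v := by
        gcongr; exact log_le_rpow_div hy₀.le hε
    _ = ε⁻¹ / y ^ (v - ε) := by rw [rpow_sub hy₀]; field_simp
    _ ≤ ε⁻¹ / y ^ (c - ε) := by gcongr

lemma hasDerivAt_const_div_rpow (c : ℝ) {a : ℝ} (ha : 0 < a) (v : ℝ) :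
    HasDerivAt (fun w => c / a ^ w) (-(log a * c / a ^ v)) v := by
  have hav : a ^ v ≠ 0 := (rpow_pos_of_pos ha v).ne'
  refine ((hasDerivAt_const v c).fun_div (hasStrictDerivAt_const_rpow ha v).hasDerivAt
    hav).congr_deriv ?_
  field_simp
  ring

lemma hasDerivAt_cmpZeta (x : ℝ) {nu : ℝ} (hnu : 0 < nu) :
    HasDerivAt (cmpZeta x)
      (-∑' s : ℕ, log (s.factorial : ℝ) * x ^ s / (s.factorial : ℝ) ^ nu) nu := by
  rw [← tsum_neg]
  refine hasDerivAt_tsum_of_isPreconnected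
    ((summable_pow_div_factorial_rpow x (d := nu / 4) (by linarith)).norm.mul_left (nu / 4)⁻¹)
    isOpen_Ioi isPreconnected_Ioi (t := Set.Ioi (nu / 2))
    (fun n v _ => hasDerivAt_const_div_rpow _ (by positivity) v) ?_ (y₀ := nu)
    (Set.mem_Ioi.mpr (by linarith)) (summable_pow_div_factorial_rpow x hnu)
    (Set.mem_Ioi.mpr (by linarith))
  intro n v hv
  have hfac : (1 : ℝ) ≤ n.factorial := by exact_mod_cast n.factorial_pos
  have hbound := log_div_rpow_le hfac (ε := nu / 4) (by linarith) (Set.mem_Ioi.mp hv).le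
  rw [show nu / 2 - nu / 4 = nu / 4 by ring] at hbound
  calc ‖-(log (n.factorial : ℝ) * x ^ n / (n.factorial : ℝ) ^ v)‖
      = |x| ^ n * (log (n.factorial : ℝ) / (n.factorial : ℝ) ^ v) := by
        rw [norm_neg, norm_div, norm_mul, norm_pow, norm_eq_abs x,
          norm_of_nonneg (log_nonneg hfac), norm_of_nonneg (by positivity)]
        ring
    _ ≤ |x| ^ n * ((nu / 4)⁻¹ / (n.factorial : ℝ) ^ (nu / 4)) := by gcongr
    _ = (nu / 4)⁻¹ * ‖x ^ n / (n.factorial : ℝ) ^ (nu / 4)‖ := by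
        rw [norm_div, norm_pow, norm_eq_abs, norm_eq_abs,
          abs_of_pos (rpow_pos_of_pos (by positivity : (0 : ℝ) < n.factorial) _)]
        ring

theorem cmp_logfactorial_cumulant_general (lam : ℝ) :
    ∀ nu : ℝ, 0 < nu →
      HasDerivAt (fun v : ℝ => cmpZeta lam v)
        (-∑' s : ℕ, Real.log (s.factorial : ℝ) * lam ^ s / (s.factorial : ℝ) ^ nu) nu ∧
      (∑' y : ℕ, Real.log (y.factorial : ℝ) * lam ^ y
          / ((y.factorial : ℝ) ^ nu * cmpZeta lam nu))
        = -(-∑' s : ℕ, Real.log (s.factorial : ℝ) * lam ^ s / (s.factorial : ℝ) ^ nu)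
            / cmpZeta lam nu := by
  intro nu hnu
  refine ⟨hasDerivAt_cmpZeta lam hnu, ?_⟩
  rw [neg_neg, ← tsum_div_const]
  exact tsum_congr fun y => div_mul_eq_div_div _ _ _

/-- Fix `λ > 0`. The function `ν ↦ ζ(λ, ν)` is differentiable on `(0, ∞)` with derivative
`∂ζ/∂ν = −∑_{s=0}^∞ ln(s!) λ^s / (s!)^ν`, and the cumulant identity
`E[ln(Y!)] = −∂ ln ζ(λ, ν)/∂ν` holds:
`∑_y ln(y!) λ^y / ((y!)^ν ζ(λ, ν)) = −(∂ζ/∂ν)/ζ(λ, ν)`. -/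
theorem cmp_logfactorial_cumulant (lam : ℝ) (hlam : 0 < lam) :
    ∀ nu : ℝ, 0 < nu →
      HasDerivAt (fun v : ℝ => cmpZeta lam v)
        (-∑' s : ℕ, Real.log (s.factorial : ℝ) * lam ^ s / (s.factorial : ℝ) ^ nu) nu ∧
      (∑' y : ℕ, Real.log (y.factorial : ℝ) * lam ^ y
          / ((y.factorial : ℝ) ^ nu * cmpZeta lam nu))
        = -(-∑' s : ℕ, Real.log (s.factorial : ℝ) * lam ^ s / (s.factorial : ℝ) ^ nu)
            / cmpZeta lam nu :=
  cmp_logfactorial_cumulant_general lam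
end

section
/- (Convergence of the two-step partial-maximization IRLS algorithm.) Let D₀ be a nonempty compact metric space, let L : D₀ → ℝ be continuous, and suppose L attains its maximum over D₀ at a unique point θ̂. Let T : D₀ → D₀ be continuous with L(T θ) ≥ L(θ) for every θ ∈ D₀, and suppose that L(T θ) = L(θ) implies θ = θ̂. Then for every starting point θ₀ ∈ D₀, the sequence of iterates defined by θ_{n+1} = T(θ_n) converges to θ̂. -/
open Filter Topology

/-- Convergence of the two-step partial-maximization IRLS algorithm.  Let `D₀` be a
nonempty compact metric space, `L : D₀ → ℝ` continuous, attaining its maximum over `D₀`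
at a unique point `θ̂`.  Let `T : D₀ → D₀` be continuous with `L(Tθ) ≥ L(θ)` for all `θ`,
and suppose `L(Tθ) = L(θ)` implies `θ = θ̂`.  Then for any starting point `θ₀`, the
iterates `θ_{n+1} = T(θ_n)` converge to `θ̂`. -/
theorem irls_two_step_converges {D : Type*} [MetricSpace D] [CompactSpace D] [Nonempty D]
    (L : D → ℝ) (hL : Continuous L)
    (θhat : D) (hmax : ∀ θ : D, L θ ≤ L θhat)
    (huniq : ∀ θ : D, L θ = L θhat → θ = θhat)
    (T : D → D) (hT : Continuous T)
    (hincr : ∀ θ : D, L θ ≤ L (T θ))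
    (hfix : ∀ θ : D, L (T θ) = L θ → θ = θhat)
    (θ0 : D) :
    Filter.Tendsto (fun n : ℕ => T^[n] θ0) Filter.atTop (nhds θhat) := by
  set u : ℕ → D := fun n => T^[n] θ0 with hu
  have hstep : ∀ n, u (n + 1) = T (u n) := by
    intro n; simp [hu, Function.iterate_succ_apply']
  have hmono : Monotone (fun n => L (u n)) := by
    apply monotone_nat_of_le_succ
    intro n
    rw [hstep]
    exact hincr _
  have hbdd : BddAbove (Set.range (fun n => L (u n))) :=
    ⟨L θhat, by rintro x ⟨n, rfl⟩; exact hmax _⟩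
  obtain ⟨ℓ, hℓ⟩ : ∃ ℓ, Tendsto (fun n => L (u n)) atTop (𝓝 ℓ) :=
    ⟨_, tendsto_atTop_ciSup hmono hbdd⟩
  apply tendsto_of_subseq_tendsto
  intro ns hns
  obtain ⟨x, -, φ, hφ, hx⟩ := IsCompact.tendsto_subseq (x := fun n => u (ns n))
    (s := (Set.univ : Set D)) isCompact_univ (fun n => trivial)
  refine ⟨φ, ?_⟩
  have hlim : Tendsto (fun n => u (ns (φ n))) atTop (𝓝 x) := hx
  have h1 : Tendsto (fun n => L (u (ns (φ n)))) atTop (𝓝 (L x)) :=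
    (hL.tendsto x).comp hlim
  have hnsφ : Tendsto (fun n => ns (φ n)) atTop atTop :=
    hns.comp hφ.tendsto_atTop
  have h1' : Tendsto (fun n => L (u (ns (φ n)))) atTop (𝓝 ℓ) := hℓ.comp hnsφ
  have hLx : L x = ℓ := tendsto_nhds_unique h1 h1'
  have h2 : Tendsto (fun n => u (ns (φ n) + 1)) atTop (𝓝 (T x)) := by
    simp only [hstep]
    exact (hT.tendsto x).comp hlim
  have h2L : Tendsto (fun n => L (u (ns (φ n) + 1))) atTop (𝓝 (L (T x))) :=
    (hL.tendsto _).comp h2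
  have h2L' : Tendsto (fun n => L (u (ns (φ n) + 1))) atTop (𝓝 ℓ) :=
    hℓ.comp ((tendsto_add_atTop_nat 1).comp hnsφ)
  have hTx : L (T x) = ℓ := tendsto_nhds_unique h2L h2L'
  have : x = θhat := hfix x (by rw [hTx, hLx])
  rw [this] at hlim
  exact hlim
end

section
/- Let Y follow the CMP distribution with parameters λ > 0 and ν > 0, and denote its mean E[Y] = ∑_y y p(y) and variance Var(Y) = E[Y²] − (E[Y])². If 0 < ν < 1 then Var(Y) > E[Y] (over-dispersion), and if ν > 1 then Var(Y) < E[Y] (under-dispersion). -/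
open Real Filter Topology

namespace CMPaux

variable {lam nu : ℝ}

noncomputable def w (lam nu : ℝ) (s : ℕ) : ℝ := lam ^ s / (s.factorial : ℝ) ^ nu
noncomputable def f (nu : ℝ) (s : ℕ) : ℝ := ((s : ℝ) + 1) ^ (1 - nu)

lemma w_pos (hlam : 0 < lam) (s : ℕ) : 0 < w lam nu s := by
  unfold w
  have : (0:ℝ) < (s.factorial : ℝ) ^ nu :=
    rpow_pos_of_pos (Nat.cast_pos.mpr s.factorial_pos) nu
  positivity

lemma f_pos (s : ℕ) : 0 < f nu s := rpow_pos_of_pos (by positivity) _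

lemma summable_master (hlam : 0 < lam) (hnu : 0 < nu) (c : ℝ) :
    Summable (fun s : ℕ => ((s : ℝ) + 1) ^ c * w lam nu s) := by
  unfold w

  set a : ℕ → ℝ := fun s => ((s : ℝ) + 1) ^ c * (lam ^ s / (s.factorial : ℝ) ^ nu) with ha
  have hfac : ∀ s : ℕ, (0:ℝ) < (s.factorial : ℝ) := fun s =>
    Nat.cast_pos.mpr s.factorial_pos
  have hapos : ∀ s, 0 < a s := fun s => by
    have h1 : (0:ℝ) < ((s:ℝ)+1) ^ c := rpow_pos_of_pos (by positivity) c
    have h2 : (0:ℝ) < (s.factorial : ℝ) ^ nu := rpow_pos_of_pos (hfac s) nu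
    positivity
  set r : ℕ → ℝ := fun n => (((n:ℝ)+2)/((n:ℝ)+1)) ^ c * (lam * ((n:ℝ)+1) ^ (-nu)) with hrdef
  have hr : ∀ n : ℕ, a (n+1) = r n * a n := by
    intro n
    have hx : (0:ℝ) < (n:ℝ) + 1 := by positivity
    have hfact : ((n+1).factorial : ℝ) = ((n:ℝ)+1) * (n.factorial : ℝ) := by
      rw [Nat.factorial_succ]; push_cast; ring
    have hmul : (((n:ℝ)+1) * (n.factorial : ℝ)) ^ nu
        = ((n:ℝ)+1) ^ nu * (n.factorial : ℝ) ^ nu :=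
      Real.mul_rpow hx.le (hfac n).le
    have hdivc : (((n:ℝ)+2)/((n:ℝ)+1)) ^ c = ((n:ℝ)+2) ^ c / ((n:ℝ)+1) ^ c :=
      Real.div_rpow (by positivity) hx.le c
    have hneg : ((n:ℝ)+1) ^ (-nu) = (((n:ℝ)+1) ^ nu)⁻¹ := Real.rpow_neg hx.le nu
    have h1 : (0:ℝ) < ((n:ℝ)+1) ^ c := rpow_pos_of_pos hx c
    have h2 : (0:ℝ) < ((n:ℝ)+1) ^ nu := rpow_pos_of_pos hx nu
    have h3 : (0:ℝ) < (n.factorial : ℝ) ^ nu := rpow_pos_of_pos (hfac n) nu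
    simp only [ha, hrdef]
    push_cast [hfact]
    rw [hmul, hdivc, hneg]
    field_simp
    ring
  have t1 : Tendsto (fun n : ℕ => ((n:ℝ)+2)/((n:ℝ)+1)) atTop (𝓝 1) := by
    have h0 : Tendsto (fun n : ℕ => 1 + ((n:ℝ)+1)⁻¹) atTop (𝓝 (1 + 0)) := by
      refine tendsto_const_nhds.add ?_
      exact (tendsto_atTop_add_const_right atTop (1:ℝ) tendsto_natCast_atTop_atTop).inv_tendsto_atTop
    rw [add_zero] at h0
    refine h0.congr fun n => ?_
    have hx : ((n:ℝ)+1) ≠ 0 := by positivity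
    field_simp
    ring
  have t1c : Tendsto (fun n : ℕ => (((n:ℝ)+2)/((n:ℝ)+1)) ^ c) atTop (𝓝 1) := by
    have := t1.rpow_const (p := c) (Or.inl one_ne_zero)
    simpa using this
  have t2 : Tendsto (fun n : ℕ => lam * ((n:ℝ)+1) ^ (-nu)) atTop (𝓝 (lam * 0)) := by
    refine Tendsto.const_mul lam ?_
    have hp : Tendsto (fun n : ℕ => ((n:ℝ)+1) ^ nu) atTop atTop :=
      (tendsto_rpow_atTop hnu).comp
        (tendsto_atTop_add_const_right atTop (1:ℝ) tendsto_natCast_atTop_atTop)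
    have := hp.inv_tendsto_atTop
    refine this.congr fun n => ?_
    simp [Real.rpow_neg (by positivity : (0:ℝ) ≤ (n:ℝ)+1)]
  have tr : Tendsto r atTop (𝓝 0) := by
    have := t1c.mul t2
    simpa using this
  refine summable_of_ratio_test_tendsto_lt_one one_pos
    (Eventually.of_forall fun n => (hapos n).ne') ?_
  refine tr.congr fun n => ?_
  rw [Real.norm_of_nonneg (hapos (n+1)).le, Real.norm_of_nonneg (hapos n).le, hr n,
    mul_div_assoc, div_self (hapos n).ne', mul_one]

lemma summable_w (hlam : 0 < lam) (hnu : 0 < nu) : Summable (w lam nu) := by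
  have := summable_master hlam hnu 0
  simpa using this

lemma summable_fw (hlam : 0 < lam) (hnu : 0 < nu) :
    Summable (fun s => f nu s * w lam nu s) := summable_master hlam hnu (1 - nu)

lemma summable_idw (hlam : 0 < lam) (hnu : 0 < nu) :
    Summable (fun s : ℕ => (s : ℝ) * w lam nu s) := by
  refine Summable.of_nonneg_of_le (fun s => mul_nonneg (Nat.cast_nonneg s) (w_pos hlam s).le) ?_
    (summable_master hlam hnu 1)
  intro s
  have h1 : ((s:ℝ)+1) ^ (1:ℝ) = (s:ℝ)+1 := rpow_one _
  rw [h1]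
  exact mul_le_mul_of_nonneg_right (by linarith [Nat.cast_nonneg (α := ℝ) s])
    (w_pos hlam s).le

lemma summable_idfw (hlam : 0 < lam) (hnu : 0 < nu) :
    Summable (fun s : ℕ => (s : ℝ) * (f nu s * w lam nu s)) := by
  refine Summable.of_nonneg_of_le
    (fun s => mul_nonneg (Nat.cast_nonneg s) (mul_pos (f_pos s) (w_pos hlam s)).le) ?_
    (summable_master hlam hnu (2 - nu))
  intro s
  have hx : (0:ℝ) < (s:ℝ)+1 := by positivity
  have h2 : ((s:ℝ)+1) ^ (2 - nu) = ((s:ℝ)+1) * f nu s := by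
    unfold f
    rw [show (2 - nu) = 1 + (1 - nu) by ring, Real.rpow_add hx, rpow_one]
  rw [h2, mul_assoc]
  exact mul_le_mul_of_nonneg_right (by linarith [Nat.cast_nonneg (α := ℝ) s])
    (mul_pos (f_pos s) (w_pos hlam s)).le

lemma summable_sqw (hlam : 0 < lam) (hnu : 0 < nu) :
    Summable (fun s : ℕ => (s : ℝ)^2 * w lam nu s) := by
  refine Summable.of_nonneg_of_le (fun s => mul_nonneg (sq_nonneg _) (w_pos hlam s).le) ?_
    (summable_master hlam hnu 2)
  intro s
  have h1 : ((s:ℝ)+1) ^ (2:ℝ) = ((s:ℝ)+1)^(2:ℕ) := by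
    rw [show ((2:ℝ)) = ((2:ℕ):ℝ) by norm_num, Real.rpow_natCast]
  rw [h1]
  have : (s:ℝ)^2 ≤ ((s:ℝ)+1)^2 := by nlinarith [Nat.cast_nonneg (α := ℝ) s]
  exact mul_le_mul_of_nonneg_right this (w_pos hlam s).le

lemma shift_term(hlam : 0 < lam) (s : ℕ) :
    ((s:ℝ) + 1) * w lam nu (s+1) = lam * (f nu s * w lam nu s) := by
  have hx : (0:ℝ) < (s:ℝ) + 1 := by positivity
  have hfacpos : (0:ℝ) < (s.factorial : ℝ) := Nat.cast_pos.mpr s.factorial_pos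
  have hfact : ((s+1).factorial : ℝ) = ((s:ℝ)+1) * (s.factorial : ℝ) := by
    rw [Nat.factorial_succ]; push_cast; ring
  unfold w f
  rw [hfact, Real.mul_rpow hx.le hfacpos.le,
    Real.rpow_sub hx, rpow_one]
  have h2 : (0:ℝ) < ((s:ℝ)+1) ^ nu := rpow_pos_of_pos hx nu
  have h3 : (0:ℝ) < (s.factorial : ℝ) ^ nu := rpow_pos_of_pos hfacpos nu
  field_simp
  ring

lemma shift1 (hlam : 0 < lam) (hnu : 0 < nu) :
    ∑' s : ℕ, (s:ℝ) * w lam nu s = lam * ∑' s : ℕ, f nu s * w lam nu s := by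
  rw [Summable.tsum_eq_zero_add (summable_idw hlam hnu)]
  simp only [Nat.cast_zero, zero_mul, zero_add]
  rw [← tsum_mul_left]
  congr 1
  funext s
  have := shift_term (nu := nu) hlam s
  push_cast
  linarith [this]

lemma shift2 (hlam : 0 < lam) (hnu : 0 < nu) :
    ∑' s : ℕ, (s:ℝ)^2 * w lam nu s
      = lam * (∑' s : ℕ, (s:ℝ) * (f nu s * w lam nu s))
        + lam * (∑' s : ℕ, f nu s * w lam nu s) := by
  rw [Summable.tsum_eq_zero_add (summable_sqw hlam hnu)]
  simp only [Nat.cast_zero, zero_pow, zero_mul, zero_add, ne_eq, OfNat.ofNat_ne_zero,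
    not_false_iff]
  rw [← tsum_mul_left, ← tsum_mul_left,
    ← Summable.tsum_add ((summable_idfw hlam hnu).mul_left lam) ((summable_fw hlam hnu).mul_left lam)]
  congr 1
  funext s
  have h := shift_term (nu := nu) hlam s
  have : ((s:ℝ)+1)^2 * w lam nu (s+1) = ((s:ℝ)+1) * (lam * (f nu s * w lam nu s)) := by
    rw [← h]; ring
  push_cast
  nlinarith [this]

set_option maxHeartbeats 1000000 in
set_option maxHeartbeats 1000000 in
lemma cheb (hlam : 0 < lam) (hnu : 0 < nu) :
    ∑' p : ℕ × ℕ,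
      (((p.1:ℝ) - (p.2:ℝ)) * (f nu p.1 - f nu p.2)) * (w lam nu p.1 * w lam nu p.2)
    = 2 * ((∑' s : ℕ, (s:ℝ) * (f nu s * w lam nu s)) * (∑' s : ℕ, w lam nu s)
        - (∑' s : ℕ, (s:ℝ) * w lam nu s) * (∑' s : ℕ, f nu s * w lam nu s)) := by
  have Sw := summable_w hlam hnu
  have Su := summable_idw hlam hnu
  have Sv := summable_fw hlam hnu
  have Sq := summable_idfw hlam hnu
  have nw : ∀ s, 0 ≤ w lam nu s := fun s => (w_pos hlam s).le
  have nv : ∀ s, 0 ≤ f nu s * w lam nu s := fun s => (mul_pos (f_pos s) (w_pos hlam s)).le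
  have nu' : ∀ s : ℕ, 0 ≤ (s:ℝ) * w lam nu s := fun s => mul_nonneg (Nat.cast_nonneg s) (nw s)
  have nq : ∀ s : ℕ, 0 ≤ (s:ℝ) * (f nu s * w lam nu s) :=
    fun s => mul_nonneg (Nat.cast_nonneg s) (nv s)
  have P1 : Summable (fun p : ℕ × ℕ => ((p.1:ℝ) * (f nu p.1 * w lam nu p.1)) * w lam nu p.2) :=
    Sq.mul_of_nonneg Sw nq nw
  have P2 : Summable (fun p : ℕ × ℕ => w lam nu p.1 * ((p.2:ℝ) * (f nu p.2 * w lam nu p.2))) :=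
    Sw.mul_of_nonneg Sq nw nq
  have P3 : Summable (fun p : ℕ × ℕ => ((p.1:ℝ) * w lam nu p.1) * (f nu p.2 * w lam nu p.2)) :=
    Su.mul_of_nonneg Sv nu' nv
  have P4 : Summable (fun p : ℕ × ℕ => (f nu p.1 * w lam nu p.1) * ((p.2:ℝ) * w lam nu p.2)) :=
    Sv.mul_of_nonneg Su nv nu'
  have hfun : (fun p : ℕ × ℕ =>
      (((p.1:ℝ) - (p.2:ℝ)) * (f nu p.1 - f nu p.2)) * (w lam nu p.1 * w lam nu p.2))
    = fun p : ℕ × ℕ =>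
      (((p.1:ℝ) * (f nu p.1 * w lam nu p.1)) * w lam nu p.2
        + w lam nu p.1 * ((p.2:ℝ) * (f nu p.2 * w lam nu p.2)))
      - (((p.1:ℝ) * w lam nu p.1) * (f nu p.2 * w lam nu p.2)
        + (f nu p.1 * w lam nu p.1) * ((p.2:ℝ) * w lam nu p.2)) := by
    funext p; ring
  rw [hfun, Summable.tsum_sub (P1.add P2) (P3.add P4), Summable.tsum_add P1 P2, Summable.tsum_add P3 P4,
    ← Summable.tsum_mul_tsum Sq Sw P1, ← Summable.tsum_mul_tsum Sw Sq P2,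
    ← Summable.tsum_mul_tsum Su Sv P3, ← Summable.tsum_mul_tsum Sv Su P4]
  ring

set_option maxHeartbeats 1000000 in
lemma summable_pair (hlam : 0 < lam) (hnu : 0 < nu) :
    Summable (fun p : ℕ × ℕ =>
      (((p.1:ℝ) - (p.2:ℝ)) * (f nu p.1 - f nu p.2)) * (w lam nu p.1 * w lam nu p.2)) := by
  have Sw := summable_w hlam hnu
  have Su := summable_idw hlam hnu
  have Sv := summable_fw hlam hnu
  have Sq := summable_idfw hlam hnu
  have nw : ∀ s, 0 ≤ w lam nu s := fun s => (w_pos hlam s).le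
  have nv : ∀ s, 0 ≤ f nu s * w lam nu s := fun s => (mul_pos (f_pos s) (w_pos hlam s)).le
  have nu' : ∀ s : ℕ, 0 ≤ (s:ℝ) * w lam nu s := fun s => mul_nonneg (Nat.cast_nonneg s) (nw s)
  have nq : ∀ s : ℕ, 0 ≤ (s:ℝ) * (f nu s * w lam nu s) :=
    fun s => mul_nonneg (Nat.cast_nonneg s) (nv s)
  have P1 : Summable (fun p : ℕ × ℕ => ((p.1:ℝ) * (f nu p.1 * w lam nu p.1)) * w lam nu p.2) :=
    Sq.mul_of_nonneg Sw nq nw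
  have P2 : Summable (fun p : ℕ × ℕ => w lam nu p.1 * ((p.2:ℝ) * (f nu p.2 * w lam nu p.2))) :=
    Sw.mul_of_nonneg Sq nw nq
  have P3 : Summable (fun p : ℕ × ℕ => ((p.1:ℝ) * w lam nu p.1) * (f nu p.2 * w lam nu p.2)) :=
    Su.mul_of_nonneg Sv nu' nv
  have P4 : Summable (fun p : ℕ × ℕ => (f nu p.1 * w lam nu p.1) * ((p.2:ℝ) * w lam nu p.2)) :=
    Sv.mul_of_nonneg Su nv nu'
  have hfun : (fun p : ℕ × ℕ =>
      (((p.1:ℝ) - (p.2:ℝ)) * (f nu p.1 - f nu p.2)) * (w lam nu p.1 * w lam nu p.2))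
    = fun p : ℕ × ℕ =>
      (((p.1:ℝ) * (f nu p.1 * w lam nu p.1)) * w lam nu p.2
        + w lam nu p.1 * ((p.2:ℝ) * (f nu p.2 * w lam nu p.2)))
      - (((p.1:ℝ) * w lam nu p.1) * (f nu p.2 * w lam nu p.2)
        + (f nu p.1 * w lam nu p.1) * ((p.2:ℝ) * w lam nu p.2)) := by
    funext p; ring
  rw [hfun]
  exact (P1.add P2).sub (P3.add P4)

end CMPaux

/-- The CMP mean `E[Y] = ∑_y y p(y)`. -/
noncomputable def cmpMean (lam nu : ℝ) : ℝ :=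
  ∑' y : ℕ, (y : ℝ) * cmpPmf lam nu y

/-- The CMP variance `Var(Y) = E[Y²] − (E[Y])²`. -/
noncomputable def cmpVar (lam nu : ℝ) : ℝ :=
  (∑' y : ℕ, (y : ℝ) ^ 2 * cmpPmf lam nu y) - (cmpMean lam nu) ^ 2

/-- If `0 < ν < 1` the CMP distribution is over-dispersed (`Var(Y) > E[Y]`) and if
`ν > 1` it is under-dispersed (`Var(Y) < E[Y]`). -/
theorem cmp_dispersion (lam nu : ℝ) (hlam : 0 < lam) (hnu : 0 < nu) :
    (nu < 1 → cmpMean lam nu < cmpVar lam nu) ∧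
    (1 < nu → cmpVar lam nu < cmpMean lam nu) := by
  classical
  set w := CMPaux.w lam nu with hw
  set f := CMPaux.f nu with hf
  set Z := ∑' s : ℕ, w s with hZ
  set A := ∑' s : ℕ, f s * w s with hA
  set M := ∑' s : ℕ, (s:ℝ) * w s with hM
  set C := ∑' s : ℕ, (s:ℝ) * (f s * w s) with hC
  set Q := ∑' s : ℕ, (s:ℝ)^2 * w s with hQ
  have hzeta : cmpZeta lam nu = Z := rfl
  have hZpos : 0 < Z :=
    Summable.tsum_pos (CMPaux.summable_w hlam hnu) (fun s => (CMPaux.w_pos hlam s).le) 0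
      (CMPaux.w_pos hlam 0)
  have hpmf : ∀ y, cmpPmf lam nu y = w y / Z := by
    intro y
    rw [cmpPmf, hzeta, ← div_div]
    rfl
  have hmean : cmpMean lam nu = M / Z := by
    rw [cmpMean, hM, ← tsum_div_const]
    exact tsum_congr fun y => by rw [hpmf, mul_div_assoc]
  have hsq : (∑' y : ℕ, (y:ℝ)^2 * cmpPmf lam nu y) = Q / Z := by
    rw [hQ, ← tsum_div_const]
    exact tsum_congr fun y => by rw [hpmf, mul_div_assoc]
  have hM1 : M = lam * A := CMPaux.shift1 hlam hnu
  have hQ1 : Q = lam * C + lam * A := CMPaux.shift2 hlam hnu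
  have hvar : cmpVar lam nu - cmpMean lam nu = lam * (C * Z - M * A) / Z^2 := by
    rw [cmpVar, hsq, hmean, hQ1, hM1]
    field_simp
    ring
  have hcheb := CMPaux.cheb hlam hnu
  constructor
  · intro h1
    have hmono : ∀ a b : ℕ, a ≤ b → f a ≤ f b := by
      intro a b hab
      have hc : (a:ℝ) ≤ (b:ℝ) := Nat.cast_le.mpr hab
      exact Real.rpow_le_rpow (by positivity) (by linarith) (by linarith)
    have hterm : ∀ p : ℕ × ℕ,
        0 ≤ (((p.1:ℝ) - (p.2:ℝ)) * (f p.1 - f p.2)) * (w p.1 * w p.2) := by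
      intro p
      have hww : 0 ≤ w p.1 * w p.2 :=
        mul_nonneg (CMPaux.w_pos hlam _).le (CMPaux.w_pos hlam _).le
      rcases le_total p.1 p.2 with hle | hle
      · have hc : ((p.1:ℝ)) ≤ (p.2:ℝ) := Nat.cast_le.mpr hle
        have h2' := hmono p.1 p.2 hle
        exact mul_nonneg (mul_nonneg_iff.mpr (Or.inr ⟨by linarith, by linarith⟩)) hww
      · have hc : ((p.2:ℝ)) ≤ (p.1:ℝ) := Nat.cast_le.mpr hle
        have h2' := hmono p.2 p.1 hle
        exact mul_nonneg (mul_nonneg (by linarith) (by linarith)) hww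
    have hf0 : f 0 = 1 := by
      rw [hf]; unfold CMPaux.f; norm_num
    have hf1 : 1 < f 1 := by
      rw [hf]; unfold CMPaux.f
      rw [show ((1:ℕ):ℝ) + 1 = 2 by norm_num,
        Real.one_lt_rpow_iff_of_pos (by norm_num : (0:ℝ) < 2)]
      left
      constructor
      · norm_num
      · linarith
    have hw1 : 0 < w 1 := CMPaux.w_pos hlam 1
    have hw0 : 0 < w 0 := CMPaux.w_pos hlam 0
    have hposterm :
        0 < ((((1,0) : ℕ × ℕ).1:ℝ) - (((1,0) : ℕ × ℕ).2:ℝ))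
          * (f ((1,0) : ℕ × ℕ).1 - f ((1,0) : ℕ × ℕ).2)
          * (w ((1,0) : ℕ × ℕ).1 * w ((1,0) : ℕ × ℕ).2) := by
      simp only [Nat.cast_one, Nat.cast_zero, sub_zero, one_mul, hf0]
      have : 0 < f 1 - 1 := by linarith
      positivity
    have hT : 0 < ∑' p : ℕ × ℕ,
        (((p.1:ℝ) - (p.2:ℝ)) * (f p.1 - f p.2)) * (w p.1 * w p.2) :=
      Summable.tsum_pos (CMPaux.summable_pair hlam hnu) hterm (1, 0) hposterm
    rw [hcheb] at hT
    have hkey : 0 < C * Z - M * A := by linarith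
    have : 0 < cmpVar lam nu - cmpMean lam nu := by
      rw [hvar]; positivity
    linarith
  · intro h1
    have hmono : ∀ a b : ℕ, a ≤ b → f b ≤ f a := by
      intro a b hab
      have hc : (a:ℝ) ≤ (b:ℝ) := Nat.cast_le.mpr hab
      exact Real.rpow_le_rpow_of_nonpos (by positivity) (by linarith) (by linarith)
    have hterm : ∀ p : ℕ × ℕ,
        0 ≤ -((((p.1:ℝ) - (p.2:ℝ)) * (f p.1 - f p.2)) * (w p.1 * w p.2)) := by
      intro p
      have hww : 0 ≤ w p.1 * w p.2 :=
        mul_nonneg (CMPaux.w_pos hlam _).le (CMPaux.w_pos hlam _).le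
      rcases le_total p.1 p.2 with hle | hle
      · have hc : ((p.1:ℝ)) ≤ (p.2:ℝ) := Nat.cast_le.mpr hle
        have h2' := hmono p.1 p.2 hle
        have hp : ((p.1:ℝ) - (p.2:ℝ)) * (f p.1 - f p.2) ≤ 0 :=
          mul_nonpos_iff.mpr (Or.inr ⟨by linarith, by linarith⟩)
        exact neg_nonneg.mpr (mul_nonpos_iff.mpr (Or.inr ⟨hp, hww⟩))
      · have hc : ((p.2:ℝ)) ≤ (p.1:ℝ) := Nat.cast_le.mpr hle
        have h2' := hmono p.2 p.1 hle
        have hp : ((p.1:ℝ) - (p.2:ℝ)) * (f p.1 - f p.2) ≤ 0 :=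
          mul_nonpos_iff.mpr (Or.inl ⟨by linarith, by linarith⟩)
        exact neg_nonneg.mpr (mul_nonpos_iff.mpr (Or.inr ⟨hp, hww⟩))
    have hf0 : f 0 = 1 := by
      rw [hf]; unfold CMPaux.f; norm_num
    have hf1 : f 1 < 1 := by
      rw [hf]; unfold CMPaux.f
      rw [show ((1:ℕ):ℝ) + 1 = 2 by norm_num]
      exact Real.rpow_lt_one_of_one_lt_of_neg (by norm_num) (by linarith)
    have hw1 : 0 < w 1 := CMPaux.w_pos hlam 1
    have hw0 : 0 < w 0 := CMPaux.w_pos hlam 0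
    have hposterm :
        0 < -(((((1,0) : ℕ × ℕ).1:ℝ) - (((1,0) : ℕ × ℕ).2:ℝ))
          * (f ((1,0) : ℕ × ℕ).1 - f ((1,0) : ℕ × ℕ).2)
          * (w ((1,0) : ℕ × ℕ).1 * w ((1,0) : ℕ × ℕ).2)) := by
      simp only [Nat.cast_one, Nat.cast_zero, sub_zero, one_mul, hf0]
      nlinarith [mul_pos hw1 hw0]
    have hT : 0 < ∑' p : ℕ × ℕ,
        -((((p.1:ℝ) - (p.2:ℝ)) * (f p.1 - f p.2)) * (w p.1 * w p.2)) :=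
      Summable.tsum_pos ((CMPaux.summable_pair hlam hnu).neg) hterm (1, 0) hposterm
    rw [tsum_neg, hcheb] at hT
    have hkey : C * Z - M * A < 0 := by linarith
    have : cmpVar lam nu - cmpMean lam nu < 0 := by
      rw [hvar]
      have hnum : lam * (C * Z - M * A) < 0 := mul_neg_of_pos_of_neg hlam hkey
      exact div_neg_of_neg_of_pos hnum (by positivity)
    linarith
end
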